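/- arXiv:1209.4543 — 6 statements merged into one kernel-verified Lean document; each statement's English description precedes it below -/
import Mathlib

section
/- Suppose for each β in an index set B, P_β is a probability measure, T is a measurable function, and c(β, δ) satisfies P_β(T > c(β, δ)) = δ for all β, where the supremum c_sup(δ) = sup_{β∈B} c(β, δ) is attained at some β_max. If the random critical value ĉ (defined on the sample space) satisfies ĉ ≤ c_sup(δ) P_{β_max}-almost surely and P_{β_max}(ĉ < T ≤ c_sup(δ)) > 0, then sup_{β∈B} P_β(T > ĉ) > δ. -/
open MeasureTheory

theorem stmt_1 {Ω : Type*} [MeasurableSpace Ω] {B : Type*}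
    (P : B → Measure Ω) [∀ β, IsProbabilityMeasure (P β)]
    (T chat : Ω → ℝ) (hT : Measurable T) (hchat : Measurable chat)
    (c : B → ℝ) (δ : ℝ) (hδ0 : 0 < δ) (hδ1 : δ < 1)
    (hquant : ∀ β, P β {ω | T ω > c β} = ENNReal.ofReal δ)
    (βmax : B) (hmax : ∀ β, c β ≤ c βmax)
    (hle : ∀ᵐ ω ∂(P βmax), chat ω ≤ c βmax)
    (hpos : 0 < P βmax {ω | chat ω < T ω ∧ T ω ≤ c βmax}) :
    ENNReal.ofReal δ < ⨆ β, P β {ω | T ω > chat ω} := by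
  have key : ENNReal.ofReal δ < P βmax {ω | T ω > chat ω} := by
    set A : Set Ω := {ω | T ω > c βmax}
    set C : Set Ω := {ω | chat ω < T ω ∧ T ω ≤ c βmax}
    have hAm : MeasurableSet A := measurableSet_lt measurable_const hT
    have hCm : MeasurableSet C :=
      (measurableSet_lt hchat hT).inter (measurableSet_le hT measurable_const)
    have hdisj : Disjoint A C := by
      rw [Set.disjoint_left]
      rintro ω hA ⟨_, h2⟩
      exact absurd hA (not_lt.2 h2)
    have hsub : (A ∪ C : Set Ω) ≤ᵐ[P βmax] {ω | T ω > chat ω} := by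
      filter_upwards [hle] with ω hω
      rintro (hA | ⟨h1, _⟩)
      · exact lt_of_le_of_lt hω hA
      · exact h1
    have h1 : P βmax (A ∪ C) = P βmax A + P βmax C :=
      measure_union hdisj hCm
    calc ENNReal.ofReal δ = P βmax A := (hquant βmax).symm
      _ < P βmax A + P βmax C := by
          exact ENNReal.lt_add_right (measure_ne_top _ _) hpos.ne'
      _ = P βmax (A ∪ C) := h1.symm
      _ ≤ P βmax {ω | T ω > chat ω} := measure_mono_ae hsub
  exact key.trans_le (le_iSup (fun β => P β {ω | T ω > chat ω}) βmax)
end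

section
/- In the setting of the Loh-type critical value c_Loh = sup_{β ∈ I} c(β, δ − η) with 0 ≤ η < δ, suppose additionally there exists β_max ∈ B with c(β_max, δ − η) = sup_{β∈B} c(β, δ − η). Then sup_{β∈B} P_β(T > c_Loh) ≥ δ − η. -/
open MeasureTheory

theorem stmt_3 {Ω : Type*} [MeasurableSpace Ω] {B : Type*}
    (P : B → Measure Ω) [∀ β, IsProbabilityMeasure (P β)]
    (T : Ω → ℝ) (hT : Measurable T)
    (c : B → ℝ → ℝ) (δ η : ℝ) (hη0 : 0 ≤ η) (hηδ : η < δ) (hδ1 : δ < 1)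
    (hquant : ∀ β v, 0 < v → v < 1 → P β {ω | T ω > c β v} = ENNReal.ofReal v)
    (I : Ω → Set B) (hIne : ∀ ω, (I ω).Nonempty)
    (hcov : ∀ β, ENNReal.ofReal (1 - η) ≤ P β {ω | β ∈ I ω})
    (βmax : B) (hmax : ∀ β, c β (δ - η) ≤ c βmax (δ - η)) :
    ENNReal.ofReal (δ - η) ≤
      ⨆ β, P β {ω | T ω > sSup ((fun β' => c β' (δ - η)) '' I ω)} := by
  have hsub : {ω | T ω > c βmax (δ - η)} ⊆
      {ω | T ω > sSup ((fun β' => c β' (δ - η)) '' I ω)} := by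
    intro ω hω
    have hle : sSup ((fun β' => c β' (δ - η)) '' I ω) ≤ c βmax (δ - η) := by
      apply csSup_le ((hIne ω).image _)
      rintro x ⟨β', _, rfl⟩
      exact hmax β'
    exact lt_of_le_of_lt hle hω
  calc ENNReal.ofReal (δ - η)
      = P βmax {ω | T ω > c βmax (δ - η)} :=
        (hquant βmax (δ - η) (by linarith) (by linarith)).symm
    _ ≤ P βmax {ω | T ω > sSup ((fun β' => c β' (δ - η)) '' I ω)} :=
        measure_mono hsub
    _ ≤ _ := le_iSup (fun β => P β {ω | T ω > sSup ((fun β' => c β' (δ - η)) '' I ω)}) βmax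
end

section
/- Let ĉ be a random variable with ĉ ≤ c* almost surely for a constant c*, and Pr(ĉ < c*) > 0. Let S be a real-valued random variable such that, almost surely, the conditional probability Pr(S ∈ J | ĉ) is positive for every non-empty open interval J ⊆ ℝ. Then Pr(ĉ < S ≤ c*) > 0. -/
open MeasureTheory Set

/-
Choose a < c* with Pr(ĉ < a) > 0; this is possible because {ĉ < c*} is the countable union of the
sets {ĉ < q}, q rational below c*. The event {ĉ < a} is σ(ĉ)-measurable, so integrating
Pr(S ∈ (a, c*) | ĉ) > 0 over it gives Pr(ĉ < a, a < S < c*) > 0, and this event lies in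
{ĉ < S ≤ c*}.
-/

theorem exists_lt_measure_setOf_lt_pos {Ω : Type*} [MeasurableSpace Ω] {μ : Measure Ω}
    {f : Ω → ℝ} {c : ℝ} (h : 0 < μ {ω | f ω < c}) : ∃ a < c, 0 < μ {ω | f ω < a} := by
  have hcover : {ω | f ω < c} = ⋃ q : {q : ℚ // (q : ℝ) < c}, {ω | f ω < q} := by
    ext ω
    simp only [mem_ofPred_eq, mem_iUnion, Subtype.exists, exists_prop]
    refine ⟨fun hω => ?_, fun ⟨q, hqc, hωq⟩ => hωq.trans hqc⟩
    obtain ⟨q, hωq, hqc⟩ := exists_rat_btwn hω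
    exact ⟨q, hqc, hωq⟩
  rw [hcover, pos_iff_ne_zero] at h
  obtain ⟨q, hq⟩ := exists_measure_pos_of_not_measure_iUnion_null h
  exact ⟨q, q.2, hq⟩

theorem measure_inter_pos_of_condExp_indicator_pos {Ω : Type*} {m m₀ : MeasurableSpace Ω}
    {μ : Measure Ω} [IsFiniteMeasure μ] (hm : m ≤ m₀) {s t : Set Ω} (ht : MeasurableSet t)
    (hs : MeasurableSet[m] s) (hμs : 0 < μ s)
    (hpos : ∀ᵐ ω ∂μ, 0 < (μ[t.indicator (fun _ => (1 : ℝ)) | m]) ω) : 0 < μ (s ∩ t) := by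
  have : IsFiniteMeasure (μ.trim hm) := isFiniteMeasure_trim hm
  have hint : Integrable (t.indicator fun _ => (1 : ℝ)) μ := (integrable_const 1).indicator ht
  have hnonneg : 0 ≤ᵐ[μ] μ[t.indicator (fun _ => (1 : ℝ)) | m] :=
    condExp_nonneg (.of_forall fun _ => indicator_nonneg (fun _ _ => zero_le_one) _)
  have hintegral_pos : 0 < ∫ ω in s, (μ[t.indicator (fun _ => (1 : ℝ)) | m]) ω ∂μ := by
    rw [setIntegral_pos_iff_support_of_nonneg_ae (ae_restrict_of_ae hnonneg)
      integrable_condExp.integrableOn]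
    refine hμs.trans_le (measure_mono_ae ?_)
    filter_upwards [hpos] with ω hω hωs
    exact ⟨hω.ne', hωs⟩
  rw [setIntegral_condExp hm hint hs, setIntegral_indicator ht, setIntegral_const,
    smul_eq_mul, mul_one, measureReal_def] at hintegral_pos
  exact (ENNReal.toReal_pos_iff.mp hintegral_pos).1

theorem stmt_4_general {Ω : Type*} [MeasurableSpace Ω] (μ : Measure Ω) [IsProbabilityMeasure μ]
    (chat S : Ω → ℝ) (hchat : Measurable chat) (hS : Measurable S)
    (cstar : ℝ)
    (hlt : 0 < μ {ω | chat ω < cstar})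
    (hcond : ∀ a b : ℝ, a < b →
      ∀ᵐ ω ∂μ, 0 < (μ[indicator {ω' | S ω' ∈ Ioo a b} (fun _ => (1 : ℝ)) |
        MeasurableSpace.comap chat Real.measurableSpace]) ω) :
    0 < μ {ω | chat ω < S ω ∧ S ω ≤ cstar} := by
  obtain ⟨a, ha, hμa⟩ := exists_lt_measure_setOf_lt_pos hlt
  have hpos := measure_inter_pos_of_condExp_indicator_pos hchat.comap_le
    (hS measurableSet_Ioo) ⟨Iio a, measurableSet_Iio, rfl⟩ hμa (hcond a cstar ha)
  refine hpos.trans_le (measure_mono ?_)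
  rintro ω ⟨hωa, hωS⟩
  exact ⟨hωa.trans hωS.1, hωS.2.le⟩

theorem stmt_4 {Ω : Type*} [MeasurableSpace Ω] (μ : Measure Ω) [IsProbabilityMeasure μ]
    (chat S : Ω → ℝ) (hchat : Measurable chat) (hS : Measurable S)
    (cstar : ℝ)
    (hle : ∀ᵐ ω ∂μ, chat ω ≤ cstar)
    (hlt : 0 < μ {ω | chat ω < cstar})
    (hcond : ∀ a b : ℝ, a < b →
      ∀ᵐ ω ∂μ, 0 < (μ[indicator {ω' | S ω' ∈ Ioo a b} (fun _ => (1 : ℝ)) |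
        MeasurableSpace.comap chat Real.measurableSpace]) ω) :
    0 < μ {ω | chat ω < S ω ∧ S ω ≤ cstar} :=
  stmt_4_general μ chat S hchat hS cstar hlt hcond
end

section
/- Let (h_k) be a sequence of probability densities on ℝ converging pointwise (Lebesgue-almost everywhere) to a probability density h with h strictly positive. Let H_k, H be the corresponding cdfs and let 0 < v < 1. If c_k is any point with H_k(c_k) = 1 − v and c is the unique point with H(c) = 1 − v, then c_k → c. -/
open MeasureTheory Set Filter

theorem stmt_6 (h : ℕ → ℝ → ℝ) (hlim : ℝ → ℝ)
    (hmeas : ∀ k, Measurable (h k)) (hlimmeas : Measurable hlim)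
    (hnonneg : ∀ k u, 0 ≤ h k u)
    (hdens : ∀ k, ∫ u, h k u = 1)
    (hlimpos : ∀ u, 0 < hlim u)
    (hlimdens : ∫ u, hlim u = 1)
    (hae : ∀ᵐ u ∂(volume : Measure ℝ), Tendsto (fun k => h k u) atTop (nhds (hlim u)))
    (v : ℝ) (hv0 : 0 < v) (hv1 : v < 1)
    (c : ℕ → ℝ) (clim : ℝ)
    (hc : ∀ k, (∫ u in Iic (c k), h k u) = 1 - v)
    (hclim : (∫ u in Iic clim, hlim u) = 1 - v) :
    Tendsto c atTop (nhds clim) := by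
  -- integrability
  have hint : ∀ k, Integrable (h k) := by
    intro k
    by_contra hni
    have := hdens k
    rw [integral_undef hni] at this
    exact one_ne_zero this.symm
  have hlimint : Integrable hlim := by
    by_contra hni
    have := hlimdens
    rw [integral_undef hni] at this
    exact one_ne_zero this.symm
  -- convergence of the cdfs at every point
  have key : ∀ a : ℝ, Tendsto (fun k => ∫ u in Iic a, h k u) atTop
      (nhds (∫ u in Iic a, hlim u)) := by
    intro a
    -- min(h k, hlim) converges a.e. to hlim, dominated by hlim
    have hmin_tendsto : ∀ s : Set ℝ, MeasurableSet s →
        Tendsto (fun k => ∫ u in s, min (h k u) (hlim u)) atTop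
          (nhds (∫ u in s, hlim u)) := by
      intro s hs
      refine tendsto_integral_of_dominated_convergence hlim
        (fun k => ((hmeas k).min hlimmeas).aestronglyMeasurable) hlimint.restrict ?_ ?_
      · intro k
        filter_upwards with u
        rw [Real.norm_eq_abs, abs_of_nonneg (le_min (hnonneg k u) (hlimpos u).le)]
        exact min_le_right _ _
      · refine (ae_restrict_of_ae ?_)
        filter_upwards [hae] with u hu
        have : Tendsto (fun k => min (h k u) (hlim u)) atTop (nhds (min (hlim u) (hlim u))) :=
          (hu.min tendsto_const_nhds)
        simpa using this
    have hminint : ∀ k, Integrable (fun u => min (h k u) (hlim u)) := by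
      intro k
      refine hlimint.mono ((hmeas k).min hlimmeas).aestronglyMeasurable ?_
      filter_upwards with u
      rw [Real.norm_eq_abs, Real.norm_eq_abs,
        abs_of_nonneg (le_min (hnonneg k u) (hlimpos u).le), abs_of_nonneg (hlimpos u).le]
      exact min_le_right _ _
    have hlow : ∀ k, (∫ u in Iic a, min (h k u) (hlim u)) ≤ ∫ u in Iic a, h k u := by
      intro k
      exact setIntegral_mono (hminint k).restrict (hint k).restrict
        (fun u => min_le_left _ _)
    -- upper bound: ∫_{Iic a} h k = 1 - ∫_{Ioi a} h k ≤ 1 - ∫_{Ioi a} min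
    have hsplit : ∀ k, (∫ u in Iic a, h k u) + (∫ u in Ioi a, h k u) = 1 := by
      intro k
      have := integral_add_compl (measurableSet_Iic (a := a)) (hint k)
      rw [compl_Iic] at this
      rw [this, hdens k]
    have hsplitmin : ∀ k, (∫ u in Iic a, min (h k u) (hlim u))
        + (∫ u in Ioi a, min (h k u) (hlim u)) = ∫ u, min (h k u) (hlim u) := by
      intro k
      have := integral_add_compl (measurableSet_Iic (a := a)) (hminint k)
      rw [compl_Iic] at this
      exact this
    have hsplitlim : (∫ u in Iic a, hlim u) + (∫ u in Ioi a, hlim u) = 1 := by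
      have := integral_add_compl (measurableSet_Iic (a := a)) hlimint
      rw [compl_Iic] at this
      rw [this, hlimdens]
    have hhigh : ∀ k, (∫ u in Iic a, h k u)
        ≤ 1 - ∫ u in Ioi a, min (h k u) (hlim u) := by
      intro k
      have h1 : (∫ u in Ioi a, min (h k u) (hlim u)) ≤ ∫ u in Ioi a, h k u := by
        refine setIntegral_mono (hminint k).restrict (hint k).restrict
          (fun u => min_le_left _ _)
      linarith [hsplit k]
    -- squeeze
    have hub : Tendsto (fun k => 1 - ∫ u in Ioi a, min (h k u) (hlim u)) atTop
        (nhds (∫ u in Iic a, hlim u)) := by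
      have := (hmin_tendsto (Ioi a) measurableSet_Ioi).const_sub 1
      rw [show 1 - (∫ u in Ioi a, hlim u) = ∫ u in Iic a, hlim u by linarith] at this
      exact this
    exact tendsto_of_tendsto_of_tendsto_of_le_of_le
      (hmin_tendsto (Iic a) measurableSet_Iic) hub hlow hhigh
  -- cdf of hlim is strictly increasing
  have hstrict : ∀ a b : ℝ, a < b →
      (∫ u in Iic a, hlim u) < ∫ u in Iic b, hlim u := by
    intro a b hab
    have hsplit : (∫ u in Iic b, hlim u)
        = (∫ u in Iic a, hlim u) + ∫ u in Ioc a b, hlim u := by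
      rw [← setIntegral_union (Iic_disjoint_Ioc le_rfl) measurableSet_Ioc
        hlimint.integrableOn hlimint.integrableOn, Iic_union_Ioc_eq_Iic hab.le]
    have hpos : 0 < ∫ u in Ioc a b, hlim u := by
      rw [setIntegral_pos_iff_support_of_nonneg_ae
        (Eventually.of_forall fun u => (hlimpos u).le) hlimint.integrableOn]
      have : Function.support hlim = univ := by
        ext u; simp [Function.support, (hlimpos u).ne']
      rw [this, univ_inter]
      simp [Real.volume_Ioc, hab]
    linarith
  -- monotonicity of the cdfs of h k
  have hmono : ∀ k, ∀ a b : ℝ, a ≤ b →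
      (∫ u in Iic a, h k u) ≤ ∫ u in Iic b, h k u := by
    intro k a b hab
    exact setIntegral_mono_set (hint k).integrableOn
      (Eventually.of_forall fun u => hnonneg k u)
      (HasSubset.Subset.eventuallyLE (Iic_subset_Iic.2 hab))
  -- conclude
  rw [tendsto_order]
  constructor
  · intro a ha
    have h1 : (∫ u in Iic a, hlim u) < 1 - v := hclim ▸ hstrict a clim ha
    have h2 : ∀ᶠ k in atTop, (∫ u in Iic a, h k u) < 1 - v :=
      (key a).eventually_lt_const h1
    filter_upwards [h2] with k hk
    by_contra hle
    push_neg at hle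
    exact absurd (hc k) (by have := hmono k _ _ hle; linarith)
  · intro b hb
    have h1 : 1 - v < ∫ u in Iic b, hlim u := hclim ▸ hstrict clim b hb
    have h2 : ∀ᶠ k in atTop, 1 - v < ∫ u in Iic b, h k u :=
      (key b).eventually_const_lt h1
    filter_upwards [h2] with k hk
    by_contra hle
    push_neg at hle
    exact absurd (hc k) (by have := hmono k _ _ hle; linarith)
end

section
/- Fix ρ with 0 < |ρ| < 1, c > 0, and γ ∈ ℝ. The function h_γ(u) = Δ(γ, c)·φ(u + ργ/√(1−ρ²)) + (1 − Δ((γ + ρu)/√(1−ρ²), c/√(1−ρ²)))·φ(u), where Δ(a,b) = Φ(a+b) − Φ(a−b) and φ, Φ are the standard normal density and cdf, is a probability density on ℝ, i.e., h_γ is nonnegative and integrates to 1. -/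
/-
With s = √(1 - ρ²), the Gaussian identity φ((w + ρu)/s) φ(u) = φ(w) φ((u + ρw)/s) (both sides are
the standard bivariate normal density with correlation -ρ, up to the factor s) gives
∫ s⁻¹ φ((w + ρu)/s) φ(u) du = φ(w). Writing Φ((α + ρu)/s) as ∫_{w ≤ α} s⁻¹ φ((w + ρu)/s) dw and
swapping the integrals yields ∫ Φ((α + ρu)/s) φ(u) du = Φ(α), hence
∫ Δ((γ + ρu)/s, c/s) φ(u) du = Δ(γ, c), which is exactly what makes h_γ integrate to 1.
-/

open MeasureTheory Real Set

noncomputable def stdPhi (u : ℝ) : ℝ := (Real.sqrt (2 * Real.pi))⁻¹ * Real.exp (-(u ^ 2) / 2)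

noncomputable def stdCdf (x : ℝ) : ℝ := ∫ u in Iic x, stdPhi u

noncomputable def Del (a b : ℝ) : ℝ := stdCdf (a + b) - stdCdf (a - b)

noncomputable def pmsDensity (ρ c γ : ℝ) (u : ℝ) : ℝ :=
  Del γ c * stdPhi (u + ρ * γ / Real.sqrt (1 - ρ ^ 2)) +
    (1 - Del ((γ + ρ * u) / Real.sqrt (1 - ρ ^ 2)) (c / Real.sqrt (1 - ρ ^ 2))) * stdPhi u

open ProbabilityTheory

lemma stdPhi_eq_gaussianPDFReal : stdPhi = gaussianPDFReal 0 1 := by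
  ext u
  simp [stdPhi, gaussianPDFReal]

lemma stdPhi_nonneg (u : ℝ) : 0 ≤ stdPhi u :=
  stdPhi_eq_gaussianPDFReal ▸ gaussianPDFReal_nonneg 0 1 u

@[fun_prop]
lemma continuous_stdPhi : Continuous stdPhi := by
  unfold stdPhi; fun_prop

lemma integrable_stdPhi : Integrable stdPhi :=
  stdPhi_eq_gaussianPDFReal ▸ integrable_gaussianPDFReal 0 1

lemma integral_stdPhi : ∫ u, stdPhi u = 1 :=
  stdPhi_eq_gaussianPDFReal ▸ integral_gaussianPDFReal_eq_one 0 one_ne_zero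

lemma integral_comp_add_div {s : ℝ} (hs : 0 < s) (f : ℝ → ℝ) (a : ℝ) :
    ∫ u, f ((u + a) / s) = s * ∫ u, f u := by
  rw [integral_add_right_eq_self (fun u => f (u / s)) a, Measure.integral_comp_div,
    abs_of_pos hs, smul_eq_mul]

lemma stdCdf_nonneg (x : ℝ) : 0 ≤ stdCdf x :=
  integral_nonneg stdPhi_nonneg

lemma stdCdf_le_one (x : ℝ) : stdCdf x ≤ 1 :=
  integral_stdPhi ▸ setIntegral_le_integral integrable_stdPhi (.of_forall stdPhi_nonneg)

lemma monotone_stdCdf : Monotone stdCdf := fun _ _ hab =>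
  setIntegral_mono_set integrable_stdPhi.integrableOn (.of_forall stdPhi_nonneg)
    (Iic_subset_Iic.2 hab).eventuallyLE

lemma Del_nonneg (a : ℝ) {b : ℝ} (hb : 0 ≤ b) : 0 ≤ Del a b :=
  sub_nonneg.2 (monotone_stdCdf (by linarith))

lemma Del_le_one (a b : ℝ) : Del a b ≤ 1 := by
  unfold Del
  linarith [stdCdf_le_one (a + b), stdCdf_nonneg (a - b)]

lemma stdCdf_add_div {s : ℝ} (hs : 0 < s) (α t : ℝ) :
    stdCdf ((α + t) / s) = ∫ w in Iic α, s⁻¹ * stdPhi ((w + t) / s) := by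
  have hind : (Iic α).indicator (fun w => stdPhi ((w + t) / s))
      = fun w => (Iic ((α + t) / s)).indicator stdPhi ((w + t) / s) := by
    ext w
    have : w ≤ α ↔ (w + t) / s ≤ (α + t) / s := by
      rw [div_le_div_iff_of_pos_right hs, add_le_add_iff_right]
    by_cases hw : w ≤ α
    · simp [hw, this.1 hw]
    · simp [hw, mt this.2 hw]
  rw [integral_const_mul, ← integral_indicator measurableSet_Iic, hind,
    integral_comp_add_div hs, integral_indicator measurableSet_Iic, inv_mul_cancel_left₀ hs.ne']
  rfl

lemma integrable_stdCdf_comp_mul_stdPhi {f : ℝ → ℝ} (hf : Measurable f) :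
    Integrable fun u => stdCdf (f u) * stdPhi u :=
  integrable_stdPhi.bdd_mul (c := 1) (monotone_stdCdf.measurable.comp hf).aestronglyMeasurable
    (.of_forall fun u => by
      rw [norm_of_nonneg (stdCdf_nonneg _)]; exact stdCdf_le_one _)

lemma integrable_Del_comp_mul_stdPhi {f g : ℝ → ℝ} (hf : Measurable f) (hg : Measurable g) :
    Integrable fun u => Del (f u) (g u) * stdPhi u := by
  simp_rw [Del, sub_mul]
  exact (integrable_stdCdf_comp_mul_stdPhi (hf.add hg)).sub
    (integrable_stdCdf_comp_mul_stdPhi (hf.sub hg))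

section GaussianKernel

variable {ρ s : ℝ}

lemma stdPhi_mul_stdPhi_swap (hρs : ρ ^ 2 + s ^ 2 = 1) (hs : 0 < s) (w u : ℝ) :
    stdPhi ((w + ρ * u) / s) * stdPhi u = stdPhi w * stdPhi ((u + ρ * w) / s) := by
  have hquad : ((w + ρ * u) / s) ^ 2 + u ^ 2 = w ^ 2 + ((u + ρ * w) / s) ^ 2 := by
    field_simp
    linear_combination (u ^ 2 - w ^ 2) * hρs
  simp only [stdPhi]
  rw [mul_mul_mul_comm, mul_mul_mul_comm _ (exp _), ← exp_add, ← exp_add]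
  congr 2
  linarith

lemma integral_stdPhi_affine_mul_stdPhi (hρs : ρ ^ 2 + s ^ 2 = 1) (hs : 0 < s) (w : ℝ) :
    ∫ u, s⁻¹ * stdPhi ((w + ρ * u) / s) * stdPhi u = stdPhi w := by
  simp_rw [mul_assoc, stdPhi_mul_stdPhi_swap hρs hs]
  rw [integral_const_mul, integral_const_mul, integral_comp_add_div hs stdPhi, integral_stdPhi]
  field_simp

lemma integrable_stdPhi_affine_mul_stdPhi (hρs : ρ ^ 2 + s ^ 2 = 1) (hs : 0 < s) (w : ℝ) :
    Integrable fun u => s⁻¹ * stdPhi ((w + ρ * u) / s) * stdPhi u := by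
  simp_rw [mul_assoc, stdPhi_mul_stdPhi_swap hρs hs]
  exact (((integrable_stdPhi.comp_div hs.ne').comp_add_right (ρ * w)).const_mul _).const_mul _

lemma integrable_uncurry_stdPhi_affine_mul_stdPhi (hρs : ρ ^ 2 + s ^ 2 = 1) (hs : 0 < s) :
    Integrable (Function.uncurry fun u w => s⁻¹ * stdPhi ((w + ρ * u) / s) * stdPhi u)
      (volume.prod volume) := by
  have hcont :
      Continuous (Function.uncurry fun u w => s⁻¹ * stdPhi ((w + ρ * u) / s) * stdPhi u) := by
    unfold Function.uncurry; fun_prop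
  rw [integrable_prod_iff' hcont.aestronglyMeasurable]
  refine ⟨.of_forall (integrable_stdPhi_affine_mul_stdPhi hρs hs),
    integrable_stdPhi.congr (.of_forall fun w => ?_)⟩
  rw [← integral_stdPhi_affine_mul_stdPhi hρs hs w]
  refine integral_congr_ae (.of_forall fun u => ?_)
  have := stdPhi_nonneg u
  have := stdPhi_nonneg ((w + ρ * u) / s)
  simp only [Function.uncurry_apply_pair, norm_of_nonneg (by positivity :
    0 ≤ s⁻¹ * stdPhi ((w + ρ * u) / s) * stdPhi u)]

lemma integral_stdCdf_affine_mul_stdPhi (hρs : ρ ^ 2 + s ^ 2 = 1) (hs : 0 < s) (α : ℝ) :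
    ∫ u, stdCdf ((α + ρ * u) / s) * stdPhi u = stdCdf α := calc
  _ = ∫ u, ∫ w in Iic α, s⁻¹ * stdPhi ((w + ρ * u) / s) * stdPhi u := by
    simp_rw [stdCdf_add_div hs, integral_mul_const]
  _ = ∫ w in Iic α, ∫ u, s⁻¹ * stdPhi ((w + ρ * u) / s) * stdPhi u :=
    integral_integral_swap (by
      simpa only [← Measure.prod_restrict, Measure.restrict_univ] using
        (integrable_uncurry_stdPhi_affine_mul_stdPhi hρs hs).restrict (s := univ ×ˢ Iic α))
  _ = stdCdf α := by
    simp_rw [integral_stdPhi_affine_mul_stdPhi hρs hs]; rfl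

lemma integral_Del_affine_mul_stdPhi (hρs : ρ ^ 2 + s ^ 2 = 1) (hs : 0 < s) (γ c : ℝ) :
    ∫ u, Del ((γ + ρ * u) / s) (c / s) * stdPhi u = Del γ c := by
  have hsplit : ∀ u, Del ((γ + ρ * u) / s) (c / s) * stdPhi u
      = stdCdf ((γ + c + ρ * u) / s) * stdPhi u - stdCdf ((γ - c + ρ * u) / s) * stdPhi u := by
    intro u
    rw [Del, sub_mul]
    ring_nf
  simp_rw [hsplit]
  rw [integral_sub (integrable_stdCdf_comp_mul_stdPhi (by fun_prop))
      (integrable_stdCdf_comp_mul_stdPhi (by fun_prop)),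
    integral_stdCdf_affine_mul_stdPhi hρs hs, integral_stdCdf_affine_mul_stdPhi hρs hs, Del]

end GaussianKernel

lemma pmsDensity_nonneg (ρ γ u : ℝ) {c : ℝ} (hc : 0 ≤ c) : 0 ≤ pmsDensity ρ c γ u :=
  add_nonneg (mul_nonneg (Del_nonneg γ hc) (stdPhi_nonneg _))
    (mul_nonneg (sub_nonneg.2 (Del_le_one _ _)) (stdPhi_nonneg _))

lemma integral_pmsDensity {ρ : ℝ} (hρ : |ρ| < 1) (c γ : ℝ) : ∫ u, pmsDensity ρ c γ u = 1 := by
  have hρ2 : ρ ^ 2 < 1 := (sq_lt_one_iff_abs_lt_one ρ).2 hρ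
  simp only [pmsDensity, sub_mul, one_mul]
  set s := √(1 - ρ ^ 2)
  have hs : 0 < s := sqrt_pos.2 (by linarith)
  have hρs : ρ ^ 2 + s ^ 2 = 1 := by rw [sq_sqrt (by linarith)]; ring
  have hshift : Integrable fun u => Del γ c * stdPhi (u + ρ * γ / s) :=
    (integrable_stdPhi.comp_add_right _).const_mul _
  have hDel : Integrable fun u => Del ((γ + ρ * u) / s) (c / s) * stdPhi u :=
    integrable_Del_comp_mul_stdPhi (by fun_prop) (by fun_prop)
  rw [integral_add hshift (by exact integrable_stdPhi.sub hDel),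
    integral_sub integrable_stdPhi hDel,
    integral_const_mul, integral_add_right_eq_self stdPhi, integral_stdPhi,
    integral_Del_affine_mul_stdPhi hρs hs]
  ring

theorem stmt_7_general (ρ c γ : ℝ) (hρ1 : |ρ| < 1) (hc : 0 < c) :
    (∀ u, 0 ≤ pmsDensity ρ c γ u) ∧ (∫ u, pmsDensity ρ c γ u = 1) :=
  ⟨fun u => pmsDensity_nonneg ρ γ u hc.le, integral_pmsDensity hρ1 c γ⟩

theorem stmt_7 (ρ c γ : ℝ) (hρ0 : ρ ≠ 0) (hρ1 : |ρ| < 1) (hc : 0 < c) :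
    (∀ u, 0 ≤ pmsDensity ρ c γ u) ∧ (∫ u, pmsDensity ρ c γ u = 1) :=
  stmt_7_general ρ c γ hρ1 hc
end

section
/- Fix ρ with 0 < |ρ| < 1, c > 0, and let W, Z be independent standard normal random variables. For γ ∈ ℝ define T'(ρ,γ) = (√(1−ρ²)·W + ρZ)·1{|Z+γ| > c} + (W − ργ/√(1−ρ²))·1{|Z+γ| ≤ c}. Then T'(ρ,γ) has the same distribution as −T'(−ρ,γ), and T'(ρ,γ) has the same distribution as T'(−ρ,−γ). -/
open MeasureTheory ProbabilityTheory

noncomputable def Tstat (ρ c γ : ℝ) (p : ℝ × ℝ) : ℝ :=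
  if c < |p.2 + γ| then Real.sqrt (1 - ρ ^ 2) * p.1 + ρ * p.2
  else p.1 - ρ * γ / Real.sqrt (1 - ρ ^ 2)

noncomputable def stdNormal2 : Measure (ℝ × ℝ) :=
  (gaussianReal 0 1).prod (gaussianReal 0 1)

/-! Both identities come from the sign symmetry of `N(0,1)`: flipping the sign of `W` turns
`T'(ρ,γ)` into `-T'(-ρ,γ)`, and flipping the sign of `Z` turns `T'(-ρ,-γ)` into `T'(ρ,γ)`,
because `|-Z - γ| = |Z + γ|`. -/

open scoped NNReal

lemma measurePreserving_neg_gaussianReal (v : ℝ≥0) :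
    MeasurePreserving (fun x : ℝ => -x) (gaussianReal 0 v) (gaussianReal 0 v) :=
  ⟨measurable_neg, by rw [gaussianReal_map_neg, neg_zero]⟩

lemma measurable_Tstat (ρ c γ : ℝ) : Measurable (Tstat ρ c γ) :=
  Measurable.ite (measurableSet_lt measurable_const (measurable_snd.add_const γ).abs)
    ((measurable_fst.const_mul _).add (measurable_snd.const_mul ρ))
    (measurable_fst.sub measurable_const)

lemma neg_Tstat_neg_eq_Tstat_comp (ρ c γ : ℝ) :
    (fun p => -Tstat (-ρ) c γ p) = Tstat ρ c γ ∘ Prod.map (fun w : ℝ => -w) id := by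
  funext p
  simp only [Tstat, Function.comp, Prod.map, id, neg_sq]
  split_ifs <;> ring

lemma Tstat_neg_neg_comp (ρ c γ : ℝ) :
    Tstat (-ρ) c (-γ) ∘ Prod.map id (fun z : ℝ => -z) = Tstat ρ c γ := by
  funext p
  simp only [Tstat, Function.comp, Prod.map, id, neg_sq, ← neg_add, abs_neg]
  split_ifs <;> ring

theorem stmt_8_general (ρ c γ : ℝ) :
    Measure.map (Tstat ρ c γ) stdNormal2 =
        Measure.map (fun p => -(Tstat (-ρ) c γ p)) stdNormal2 ∧
      Measure.map (Tstat ρ c γ) stdNormal2 = Measure.map (Tstat (-ρ) c (-γ)) stdNormal2 := by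
  have hW : MeasurePreserving (Prod.map (fun w : ℝ => -w) id) stdNormal2 stdNormal2 :=
    (measurePreserving_neg_gaussianReal 1).prod (.id _)
  have hZ : MeasurePreserving (Prod.map id (fun z : ℝ => -z)) stdNormal2 stdNormal2 :=
    (MeasurePreserving.id _).prod (measurePreserving_neg_gaussianReal 1)
  constructor
  · rw [neg_Tstat_neg_eq_Tstat_comp, ← Measure.map_map (measurable_Tstat ρ c γ) hW.measurable,
      hW.map_eq]
  · rw [← Tstat_neg_neg_comp, ← Measure.map_map (measurable_Tstat _ c _) hZ.measurable,
      hZ.map_eq]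

theorem stmt_8 (ρ c γ : ℝ) (hρ0 : ρ ≠ 0) (hρ1 : |ρ| < 1) (hc : 0 < c) :
    Measure.map (Tstat ρ c γ) stdNormal2 =
        Measure.map (fun p => -(Tstat (-ρ) c γ p)) stdNormal2 ∧
      Measure.map (Tstat ρ c γ) stdNormal2 = Measure.map (Tstat (-ρ) c (-γ)) stdNormal2 :=
  stmt_8_general ρ c γ
end
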